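/- arXiv:1112.5041 — 7 statements merged into one kernel-verified Lean document; each statement's English description precedes it below -/
import Mathlib

section
/- Let A₂ ⊆ A₁ ⊆ A₀ be finite arrangements of hyperplanes in ℝ^d, and fix a total ordering ≻₀ on the set of chambers of A₀. For subarrangements B ⊆ C, let μ[B,C] : T(B) → T(C) send a chamber D of B to the ≻-minimal chamber of C contained in D (where the order on T(C) is the one induced from ≻₀ via μ[C,A₀]). Then μ[A₁,A₀] ∘ μ[A₂,A₁] = μ[A₂,A₀]. -/
open Matrix

/-!
STATEMENT 0: For real hyperplane arrangements A₂ ⊆ A₁ ⊆ A₀ with a total order ≻₀ on the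
chambers of A₀, the sections μ satisfy μ[A₁,A₀] ∘ μ[A₂,A₁] = μ[A₂,A₀].
A hyperplane is modelled as a pair p = (α, a) with hyperplane {x | ⟨α,x⟩ = a};
chambers are connected components of the complement.  The maps μ are characterized by
their defining property (being the minimal chamber contained in the given one), the
order on T(A₁) being the one induced from ≻₀ via μ[A₁,A₀].
-/

/-- A hyperplane in ℝ^d, given by a linear functional and a level. -/
abbrev HypPair (d : ℕ) := (Fin d → ℝ) × ℝ

/-- The hyperplane determined by a pair. -/
def hypSet {d : ℕ} (p : HypPair d) : Set (Fin d → ℝ) := {x | p.1 ⬝ᵥ x = p.2}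

/-- The complement of an arrangement. -/
def hypComplement {d : ℕ} (A : Finset (HypPair d)) : Set (Fin d → ℝ) :=
  {x | ∀ p ∈ A, p.1 ⬝ᵥ x ≠ p.2}

/-- `C` is a chamber of the arrangement `A`: a connected component of the complement. -/
def IsChamber {d : ℕ} (A : Finset (HypPair d)) (C : Set (Fin d → ℝ)) : Prop :=
  ∃ x ∈ hypComplement A, C = connectedComponentIn (hypComplement A) x

/-- The type of chambers of an arrangement. -/
abbrev Chamber {d : ℕ} (A : Finset (HypPair d)) := {C : Set (Fin d → ℝ) // IsChamber A C}

/-!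
Let `x` be a point of the chamber `μ[A₂,A₀] D` and `K` the chamber of `A₁` containing `x`.
Then `μ[A₂,A₀] D ⊆ K ⊆ D`, so minimality of the three sections gives
`μ[A₁,A₀] (μ[A₂,A₁] D) ≼ μ[A₁,A₀] K ≼ μ[A₂,A₀] D ≼ μ[A₁,A₀] (μ[A₂,A₁] D)`,
and antisymmetry closes the cycle.
-/

theorem hypComplement_anti {d : ℕ} {A B : Finset (HypPair d)} (h : A ⊆ B) :
    hypComplement B ⊆ hypComplement A :=
  fun _ hx p hp => hx p (h hp)

theorem IsChamber.eq_connectedComponentIn {d : ℕ} {A : Finset (HypPair d)}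
    {D : Set (Fin d → ℝ)} (hD : IsChamber A D) {x : Fin d → ℝ} (hx : x ∈ D) :
    D = connectedComponentIn (hypComplement A) x := by
  obtain ⟨y, -, rfl⟩ := hD
  exact connectedComponentIn_eq hx

theorem IsChamber.exists_between {d : ℕ} {A B C : Finset (HypPair d)}
    (hAB : A ⊆ B) (hBC : B ⊆ C) {E D : Set (Fin d → ℝ)}
    (hE : IsChamber C E) (hD : IsChamber A D) (hED : E ⊆ D) :
    ∃ K, IsChamber B K ∧ E ⊆ K ∧ K ⊆ D := by
  obtain ⟨x, hx, rfl⟩ := hE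
  refine ⟨connectedComponentIn (hypComplement B) x, ⟨x, hypComplement_anti hBC hx, rfl⟩,
    connectedComponentIn_mono x (hypComplement_anti hBC), ?_⟩
  rw [hD.eq_connectedComponentIn (hED (mem_connectedComponentIn hx))]
  exact connectedComponentIn_mono x (hypComplement_anti hAB)

theorem stmt0 {d : ℕ} (A₀ A₁ A₂ : Finset (HypPair d))
    (h21 : A₂ ⊆ A₁) (h10 : A₁ ⊆ A₀)
    -- a total order ≻₀ on the chambers of A₀ (as a reflexive linear order r₀)
    (r₀ : Chamber A₀ → Chamber A₀ → Prop) (hr₀ : IsLinearOrder (Chamber A₀) r₀)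
    -- μ[A₁,A₀]: the r₀-minimal chamber of A₀ contained in a chamber of A₁
    (μ10 : Chamber A₁ → Chamber A₀)
    (hμ10sub : ∀ D : Chamber A₁, (μ10 D).1 ⊆ D.1)
    (hμ10min : ∀ (D : Chamber A₁) (K : Chamber A₀), K.1 ⊆ D.1 → r₀ (μ10 D) K)
    -- μ[A₂,A₁]: minimal wrt the order on T(A₁) induced from r₀ via μ10
    (μ21 : Chamber A₂ → Chamber A₁)
    (hμ21sub : ∀ D : Chamber A₂, (μ21 D).1 ⊆ D.1)
    (hμ21min : ∀ (D : Chamber A₂) (K : Chamber A₁), K.1 ⊆ D.1 → r₀ (μ10 (μ21 D)) (μ10 K))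
    -- μ[A₂,A₀]: minimal wrt r₀
    (μ20 : Chamber A₂ → Chamber A₀)
    (hμ20sub : ∀ D : Chamber A₂, (μ20 D).1 ⊆ D.1)
    (hμ20min : ∀ (D : Chamber A₂) (K : Chamber A₀), K.1 ⊆ D.1 → r₀ (μ20 D) K) :
    ∀ D : Chamber A₂, μ10 (μ21 D) = μ20 D := by
  intro D
  obtain ⟨K, hK, hμ20K, hKD⟩ := IsChamber.exists_between h21 h10 (μ20 D).2 D.2 (hμ20sub D)
  have h_le_K : r₀ (μ10 (μ21 D)) (μ10 ⟨K, hK⟩) := hμ21min D ⟨K, hK⟩ hKD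
  have hK_le : r₀ (μ10 ⟨K, hK⟩) (μ20 D) := hμ10min ⟨K, hK⟩ (μ20 D) hμ20K
  have h_ge : r₀ (μ20 D) (μ10 (μ21 D)) := hμ20min D _ ((hμ10sub _).trans (hμ21sub D))
  exact antisymm_of r₀ (trans_of r₀ h_le_K hK_le) h_ge
end

section
/- With the notation of the previous lemma, for every chamber C of a finite central real arrangement A: C is the ⪯-minimal chamber among all chambers K of A such that K and C lie in the same chamber of the subarrangement A_{X_C}, i.e. C = min_⪯ { K ∈ T(A) : K_{X_C} = C_{X_C} } where K_Y denotes the chamber of A_Y containing K. -/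
open Matrix

def Separates {d : ℕ} (p : HypPair d) (C₁ C₂ : Set (Fin d → ℝ)) : Prop :=
  ∃ x ∈ C₁, ∃ y ∈ C₂, (p.1 ⬝ᵥ x - p.2) * (p.1 ⬝ᵥ y - p.2) < 0

def sepSet {d : ℕ} (A : Finset (HypPair d)) (C₁ C₂ : Set (Fin d → ℝ)) : Set (HypPair d) :=
  {p | p ∈ A ∧ Separates p C₁ C₂}

def IsFlat {d : ℕ} (A : Finset (HypPair d)) (X : Set (Fin d → ℝ)) : Prop :=
  ∃ S : Finset (HypPair d), S ⊆ A ∧ X = ⋂ p ∈ S, hypSet p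

theorem stmt3 {d : ℕ} (A : Finset (HypPair d))
    (hcentral : ∀ p ∈ A, p.2 = 0)
    (B : Chamber A)
    (r : Chamber A → Chamber A → Prop) (hr : IsLinearOrder (Chamber A) r)
    (hext : ∀ C D : Chamber A, sepSet A C.1 B.1 ⊆ sepSet A D.1 B.1 → r C D)
    (C : Chamber A)
    -- X_C : the minimal element of the order ideal of Lemma XC
    (XC : Set (Fin d → ℝ))
    (hXCmem : IsFlat A XC ∧ ∀ C' : Chamber A, r C' C → C' ≠ C →
        ∃ p ∈ A, XC ⊆ hypSet p ∧ Separates p C.1 C'.1)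
    (hXCmin : ∀ Y : Set (Fin d → ℝ),
        (IsFlat A Y ∧ ∀ C' : Chamber A, r C' C → C' ≠ C →
            ∃ p ∈ A, Y ⊆ hypSet p ∧ Separates p C.1 C'.1) → Y ⊆ XC)
    -- the subarrangement A_{X_C}
    (AX : Finset (HypPair d)) (hAX : ∀ p, p ∈ AX ↔ p ∈ A ∧ XC ⊆ hypSet p)
    -- σ = σ_{A_{X_C}} : T(A) → T(A_{X_C}), sending a chamber to the chamber containing it
    (σ : Chamber A → Chamber AX) (hσ : ∀ K : Chamber A, K.1 ⊆ (σ K).1) :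
    -- C is the ⪯-minimum of { K ∈ T(A) : K_{X_C} = C_{X_C} }
    ∀ K : Chamber A, σ K = σ C → r C K := by
  intro K hK
  haveI := hr
  rcases total_of r C K with h | h
  · exact h
  by_cases hKC : K = C
  · subst hKC; exact refl_of r K
  obtain ⟨p, hpA, hpX, x, hx, y, hy, hsep⟩ := hXCmem.2 K h hKC
  exfalso
  have hpAX : p ∈ AX := (hAX p).2 ⟨hpA, hpX⟩
  -- x and y both lie in the chamber (σ C).1 of AX
  have hxσ : x ∈ (σ C).1 := hσ C hx
  have hyσ : y ∈ (σ C).1 := by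
    have := hσ K hy
    rwa [hK] at this
  obtain ⟨x₀, hx₀, heq⟩ := (σ C).2
  have hconn : IsPreconnected ((σ C).1) := by
    rw [heq]; exact isPreconnected_connectedComponentIn
  have hsub : (σ C).1 ⊆ hypComplement AX := by
    rw [heq]; exact connectedComponentIn_subset _ _
  set f : (Fin d → ℝ) → ℝ := fun z => p.1 ⬝ᵥ z - p.2 with hf
  have hfc : Continuous f := by
    have : Continuous fun z : Fin d → ℝ => p.1 ⬝ᵥ z := by
      simp only [dotProduct]
      exact continuous_finset_sum _ fun i _ => (continuous_const.mul (continuous_apply i))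
    exact this.sub continuous_const
  -- f x * f y < 0, so one is negative and one positive; IVT gives a zero in (σ C).1
  have key : ∃ z ∈ (σ C).1, f z = 0 := by
    rcases mul_neg_iff.mp hsep with ⟨hxp, hyn⟩ | ⟨hxn, hyp⟩
    · obtain ⟨z, hz, hz0⟩ := hconn.intermediate_value₂ hyσ hxσ hfc.continuousOn
        continuousOn_const (le_of_lt hyn) (le_of_lt hxp)
      exact ⟨z, hz, hz0⟩
    · obtain ⟨z, hz, hz0⟩ := hconn.intermediate_value₂ hxσ hyσ hfc.continuousOn
        continuousOn_const (le_of_lt hxn) (le_of_lt hyp)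
      exact ⟨z, hz, hz0⟩
  obtain ⟨z, hz, hz0⟩ := key
  have : p.1 ⬝ᵥ z ≠ p.2 := hsub hz p hpAX
  exact this (by linarith [sub_eq_zero.mp hz0])
end

section
/- A matching 𝔐 of an acyclic category 𝒞 is acyclic if and only if (a) for all objects x, y, if some m ∈ 𝔐 belongs to Mor(x,y) then Mor(x,y) = {m}, and (b) there is a linear extension of 𝒞 (a total order on the objects compatible with the existence of morphisms) in which the source and target of every m ∈ 𝔐 are consecutive. -/
open CategoryTheory

/-!
STATEMENT 4: A matching 𝔐 of an acyclic category 𝒞 is acyclic iff (a) whenever some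
m ∈ 𝔐 lies in Mor(x,y), then Mor(x,y) = {m}, and (b) there is a linear extension of 𝒞
in which source and target of every m ∈ 𝔐 are consecutive.
-/

/-- An acyclic category: only endomorphisms are the identities, and these are the only
invertible morphisms (equivalently, morphisms in both directions force equality). -/
def IsAcyclicCat (C : Type*) [Category C] : Prop :=
  (∀ (x : C) (f : x ⟶ x), f = 𝟙 x) ∧ ∀ x y : C, (x ⟶ y) → (y ⟶ x) → x = y

/-- The type of morphisms of a category, bundled with their endpoints. -/
abbrev MorOf (C : Type*) [Category C] := Σ x y : C, x ⟶ y

def msrc {C : Type*} [Category C] (m : MorOf C) : C := m.1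
def mtgt {C : Type*} [Category C] (m : MorOf C) : C := m.2.1

/-- An indecomposable morphism in an acyclic category: a nontrivial morphism which is
not the composition of two nontrivial morphisms. -/
def Indecomp {C : Type*} [Category C] (m : MorOf C) : Prop :=
  m.1 ≠ m.2.1 ∧
  ∀ (z : C) (f : m.1 ⟶ z) (g : z ⟶ m.2.1), f ≫ g = m.2.2 → z = m.1 ∨ z = m.2.1

/-- A matching: a set of indecomposable morphisms such that the sources and targets of
any two distinct members are four distinct objects. -/
def IsMatching {C : Type*} [Category C] (M : Set (MorOf C)) : Prop :=
  (∀ m ∈ M, Indecomp m) ∧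
  ∀ m ∈ M, ∀ m' ∈ M, m ≠ m' →
    msrc m ≠ msrc m' ∧ msrc m ≠ mtgt m' ∧ mtgt m ≠ msrc m' ∧ mtgt m ≠ mtgt m'

/-- A cycle a₁b₁a₂b₂⋯aₙbₙ of the matching `M`: aᵢ ∉ M, bᵢ ∈ M, the targets of aᵢ and
bᵢ coincide and the source of aᵢ₊₁ coincides with the source of bᵢ (cyclically). -/
structure MatchingCycle {C : Type*} [Category C] (M : Set (MorOf C)) where
  n : ℕ
  npos : 0 < n
  a : Fin n → MorOf C
  b : Fin n → MorOf C
  ha : ∀ i, a i ∉ M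
  hb : ∀ i, b i ∈ M
  htgt : ∀ i, mtgt (a i) = mtgt (b i)
  hsrc : ∀ i : Fin n, msrc (a ⟨((i : ℕ) + 1) % n, Nat.mod_lt _ npos⟩) = msrc (b i)

section Aux
variable {C : Type*} [Category C]

lemma morOf_ext {s t : MorOf C} (h1 : s.1 = t.1) (h2 : s.2.1 = t.2.1)
    (h3 : s.2.2 ≫ eqToHom h2 = eqToHom h1 ≫ t.2.2) : s = t := by
  obtain ⟨a, b, f⟩ := s; obtain ⟨a', b', g⟩ := t
  dsimp at h1 h2; subst h1; subst h2; simp only [eqToHom_refl, Category.comp_id, Category.id_comp] at h3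
  subst h3; rfl

variable {M : Set (MorOf C)}

lemma src_ne_tgt' (hM : IsMatching M) {m m' : MorOf C} (hm : m ∈ M) (hm' : m' ∈ M) : msrc m ≠ mtgt m' := by
  by_cases h : m = m'
  · subst h; exact (hM.1 m hm).1
  · exact (hM.2 m hm m' hm' h).2.1

lemma tgt_inj (hM : IsMatching M) {m m' : MorOf C} (hm : m ∈ M) (hm' : m' ∈ M) (h : mtgt m = mtgt m') : m = m' := by
  by_contra hne; exact (hM.2 m hm m' hm' hne).2.2.2 h

lemma src_inj (hM : IsMatching M) {m m' : MorOf C} (hm : m ∈ M) (hm' : m' ∈ M) (h : msrc m = msrc m') : m = m' := by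
  by_contra hne; exact (hM.2 m hm m' hm' hne).1 h

end Aux

section Pi
variable {C : Type*} [Category C]

open Classical in
noncomputable def piM (M : Set (MorOf C)) : C → C := fun x =>
  if h : ∃ m, m ∈ M ∧ mtgt m = x then h.choose.1 else x

open Classical

variable {M : Set (MorOf C)}

lemma piM_tgt (hM : IsMatching M) {m : MorOf C} (hm : m ∈ M) : piM M (mtgt m) = msrc m := by
  have h : ∃ m', m' ∈ M ∧ mtgt m' = mtgt m := ⟨m, hm, rfl⟩
  rw [piM, dif_pos h]
  have := h.choose_spec
  have : h.choose = m := tgt_inj hM this.1 hm this.2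
  rw [this]; rfl

lemma piM_not_tgt {x : C} (h : ¬ ∃ m, m ∈ M ∧ mtgt m = x) : piM M x = x := dif_neg h

lemma piM_src (hM : IsMatching M) {m : MorOf C} (hm : m ∈ M) : piM M (msrc m) = msrc m := by
  apply piM_not_tgt
  rintro ⟨m', hm', h⟩
  exact src_ne_tgt' hM hm hm' h.symm

lemma piM_idem (hM : IsMatching M) (x : C) : piM M (piM M x) = piM M x := by
  by_cases h : ∃ m, m ∈ M ∧ mtgt m = x
  · obtain ⟨m, hm, hx⟩ := h
    subst hx
    rw [piM_tgt hM hm, piM_src hM hm]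
  · rw [piM_not_tgt h, piM_not_tgt h]

lemma piM_fiber (hM : IsMatching M) {x y : C} (h : piM M x = piM M y) (hxy : x ≠ y) :
    ∃ m, m ∈ M ∧ ((x = msrc m ∧ y = mtgt m) ∨ (x = mtgt m ∧ y = msrc m)) := by
  by_cases hx : ∃ m, m ∈ M ∧ mtgt m = x
  · obtain ⟨m, hm, hmx⟩ := hx
    subst hmx
    rw [piM_tgt hM hm] at h
    by_cases hy : ∃ m', m' ∈ M ∧ mtgt m' = y
    · obtain ⟨m', hm', hmy⟩ := hy
      subst hmy
      rw [piM_tgt hM hm'] at h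
      exact absurd (congrArg mtgt (src_inj hM hm hm' h)) (fun hh => hxy hh)
    · rw [piM_not_tgt hy] at h
      exact ⟨m, hm, Or.inr ⟨rfl, h.symm⟩⟩
  · rw [piM_not_tgt hx] at h
    by_cases hy : ∃ m', m' ∈ M ∧ mtgt m' = y
    · obtain ⟨m', hm', hmy⟩ := hy
      subst hmy
      rw [piM_tgt hM hm'] at h
      exact ⟨m', hm', Or.inl ⟨h, rfl⟩⟩
    · rw [piM_not_tgt hy] at h
      exact absurd (h.trans rfl) hxy
  
lemma piM_eq_src (hM : IsMatching M) {z : C} {m : MorOf C} (hm : m ∈ M) (h : piM M z = msrc m) :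
    z = msrc m ∨ z = mtgt m := by
  by_cases hz : ∃ m', m' ∈ M ∧ mtgt m' = z
  · obtain ⟨m', hm', hmz⟩ := hz
    subst hmz
    rw [piM_tgt hM hm'] at h
    right; rw [src_inj hM hm' hm h]
  · left; rwa [piM_not_tgt hz] at h

end Pi

section Steps
variable {C : Type*} [Category C]

/-- A good step: a morphism not in `M` with distinct endpoints. -/
def okStep (M : Set (MorOf C)) (s : MorOf C) : Prop := s ∉ M ∧ msrc s ≠ mtgt s

/-- Joint condition between consecutive steps. -/
def Jnt (M : Set (MorOf C)) (s t : MorOf C) : Prop := piM M (mtgt s) = piM M (msrc t)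

variable {M : Set (MorOf C)}

lemma merge1 (hC : IsAcyclicCat C) (hM : IsMatching M) {s t : MorOf C}
    (hs : okStep M s) (ht : okStep M t) (h : mtgt s = msrc t) :
    ∃ u : MorOf C, okStep M u ∧ msrc u = msrc s ∧ mtgt u = mtgt t := by
  have h' : s.2.1 = t.1 := h
  refine ⟨⟨s.1, t.2.1, s.2.2 ≫ eqToHom h' ≫ t.2.2⟩, ⟨?_, ?_⟩, rfl, rfl⟩
  · intro hu
    rcases (hM.1 _ hu).2 s.2.1 s.2.2 (eqToHom h' ≫ t.2.2) rfl with hz | hz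
    · exact hs.2 hz.symm
    · exact ht.2 (h'.symm.trans hz)
  · intro hne
    have hne' : s.1 = t.2.1 := hne
    exact hs.2 (hC.2 s.1 s.2.1 s.2.2 (eqToHom h' ≫ t.2.2 ≫ eqToHom hne'.symm))

lemma merge2 (hC : IsAcyclicCat C) (hM : IsMatching M) {s t m : MorOf C}
    (hs : okStep M s) (ht : okStep M t) (hm : m ∈ M)
    (h1 : mtgt s = msrc m) (h2 : msrc t = mtgt m) :
    ∃ u : MorOf C, okStep M u ∧ msrc u = msrc s ∧ mtgt u = mtgt t := by
  have h1' : s.2.1 = m.1 := h1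
  have h2' : m.2.1 = t.1 := h2.symm
  refine ⟨⟨s.1, t.2.1, s.2.2 ≫ eqToHom h1' ≫ m.2.2 ≫ eqToHom h2' ≫ t.2.2⟩, ⟨?_, ?_⟩, rfl, rfl⟩
  · intro hu
    have hind := (hM.1 _ hu).2
    have hfac1 : (s.2.2 ≫ eqToHom h1') ≫ (m.2.2 ≫ eqToHom h2' ≫ t.2.2)
        = s.2.2 ≫ eqToHom h1' ≫ m.2.2 ≫ eqToHom h2' ≫ t.2.2 := by simp
    have hfac2 : (s.2.2 ≫ eqToHom h1' ≫ m.2.2) ≫ (eqToHom h2' ≫ t.2.2)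
        = s.2.2 ≫ eqToHom h1' ≫ m.2.2 ≫ eqToHom h2' ≫ t.2.2 := by simp
    rcases hind m.1 (s.2.2 ≫ eqToHom h1') (m.2.2 ≫ eqToHom h2' ≫ t.2.2) hfac1 with hz' | hz'
    · have hz : m.1 = s.1 := hz'
      exact hs.2 ((h1'.trans hz).symm)
    · have hz : m.1 = t.2.1 := hz'
      rcases hind m.2.1 (s.2.2 ≫ eqToHom h1' ≫ m.2.2) (eqToHom h2' ≫ t.2.2) hfac2 with hw' | hw'
      · have hw : m.2.1 = s.1 := hw'
        have : s.1 = t.2.1 := hC.2 s.1 t.2.1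
          (s.2.2 ≫ eqToHom h1' ≫ m.2.2 ≫ eqToHom h2' ≫ t.2.2)
          (eqToHom hz.symm ≫ m.2.2 ≫ eqToHom hw)
        exact (hM.1 m hm).1 (hz.trans (this.symm.trans hw.symm))
      · have hw : m.2.1 = t.2.1 := hw'
        exact (hM.1 m hm).1 (hz.trans hw.symm)
  · intro hne
    have hne' : s.1 = t.2.1 := hne
    have : s.1 = m.1 := hC.2 s.1 m.1 (s.2.2 ≫ eqToHom h1')
      (m.2.2 ≫ eqToHom h2' ≫ t.2.2 ≫ eqToHom hne'.symm)
    exact hs.2 (h1'.trans this.symm).symm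

/-- A cyclic system of steps of period `k`. -/
def CycSys (M : Set (MorOf C)) (k : ℕ) (s : ℕ → MorOf C) : Prop :=
  (∀ i, s (i + k) = s i) ∧ (∀ i, okStep M (s i)) ∧ (∀ i, Jnt M (s i) (s (i + 1)))

lemma period_mod {α : Type*} {k : ℕ} (hk : 0 < k) {s : ℕ → α} (hp : ∀ i, s (i + k) = s i) :
    ∀ i, s (i % k) = s i := by
  intro i
  induction i using Nat.strong_induction_on with
  | _ i IH =>
  by_cases h : i < k
  · rw [Nat.mod_eq_of_lt h]
  · push_neg at h
    have h1 : i % k = (i - k) % k := (Nat.mod_eq_sub_mod h)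
    have h2 : i - k + k = i := Nat.sub_add_cancel h
    rw [h1, IH (i - k) (by omega), ← hp (i - k), h2]

lemma reduceCyc {k : ℕ} (hk2 : 2 ≤ k) {s : ℕ → MorOf C} (hs : CycSys M k s)
    {u : MorOf C} (hu : okStep M u) (husrc : msrc u = msrc (s 0)) (hutgt : mtgt u = mtgt (s 1)) :
    CycSys M (k - 1) (fun i => if i % (k - 1) = 0 then u else s (i % (k - 1) + 1)) := by
  set K := k - 1 with hK
  have hKpos : 0 < K := by omega
  have hmod : ∀ i : ℕ, (i + 1) % K = (i % K + 1) % K := by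
    intro i
    rw [Nat.add_mod i 1 K, Nat.add_mod (i % K) 1 K, Nat.mod_mod_of_dvd]
    exact dvd_refl K
  refine ⟨?_, ?_, ?_⟩
  · intro i; simp only [Nat.add_mod_right]
  · intro i
    by_cases h : i % K = 0 <;> simp only [h, if_pos, if_neg, if_true, if_false]
    · simpa [h] using hu
    · simpa [h] using hs.2.1 _
  · intro i
    have hrK : i % K < K := Nat.mod_lt _ hKpos
    show Jnt M (if i % K = 0 then u else s (i % K + 1))
        (if (i + 1) % K = 0 then u else s ((i + 1) % K + 1))
    have hstep : (i + 1) % K = (i % K + 1) % K := hmod i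
    have hcase : i % K + 1 < K ∨ i % K + 1 = K := by omega
    rcases hcase with hlt | heq
    · have h1 : (i + 1) % K = i % K + 1 := by rw [hstep, Nat.mod_eq_of_lt hlt]
      rw [h1, if_neg (by omega : ¬ i % K + 1 = 0)]
      by_cases hr0 : i % K = 0
      · rw [if_pos hr0, hr0]
        show Jnt M u (s (0 + 1 + 1))
        unfold Jnt
        rw [hutgt]
        exact hs.2.2 1
      · rw [if_neg hr0]
        exact hs.2.2 (i % K + 1)
    · have h1 : (i + 1) % K = 0 := by rw [hstep, heq, Nat.mod_self]
      rw [h1, if_pos rfl]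
      by_cases hr0 : i % K = 0
      · have hk2' : k = 2 := by omega
        rw [if_pos hr0]
        show Jnt M u u
        unfold Jnt
        rw [hutgt, husrc]
        have h02 : s (1 + 1) = s 0 := by
          have h' := hs.1 0
          rw [hk2'] at h'
          simpa using h'
        calc piM M (mtgt (s 1)) = piM M (msrc (s (1 + 1))) := hs.2.2 1
          _ = piM M (msrc (s 0)) := by rw [h02]
      · rw [if_neg hr0]
        show Jnt M (s (i % K + 1)) u
        unfold Jnt
        rw [husrc]
        have hsk : s (i % K + 1 + 1) = s 0 := by
          have h' : i % K + 1 + 1 = 0 + k := by omega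
          rw [h', Nat.zero_add, ← Nat.zero_add k, hs.1 0]
        calc piM M (mtgt (s (i % K + 1))) = piM M (msrc (s (i % K + 1 + 1))) := hs.2.2 (i % K + 1)
          _ = piM M (msrc (s 0)) := by rw [hsk]

end Steps

section NoCyc
variable {C : Type*} [Category C] {M : Set (MorOf C)}

lemma noCycSys (hC : IsAcyclicCat C) (hM : IsMatching M) (hnc : IsEmpty (MatchingCycle M)) :
    ∀ k, 0 < k → ∀ s : ℕ → MorOf C, CycSys M k s → False := by
  intro k
  induction k using Nat.strong_induction_on with
  | _ k IH =>
  intro hk s hs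
  by_cases hall : ∀ i : ℕ, ∃ m, m ∈ M ∧ mtgt (s i) = mtgt m ∧ msrc (s (i + 1)) = msrc m
  · -- all joints are zigzags: build a matching cycle
    choose b hbM hbt hbs using hall
    refine hnc.elim (MatchingCycle.mk k hk (fun i => s i.val) (fun i => b i.val)
      (fun i => (hs.2.1 i.val).1) (fun i => hbM i.val) (fun i => hbt i.val) (fun i => ?_))
    show msrc (s (((i : ℕ) + 1) % k)) = msrc (b i.val)
    rw [period_mod hk hs.1 ((i : ℕ) + 1)]
    exact hbs i.val
  · -- some joint is reducible; rotate it to position 0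
    push_neg at hall
    obtain ⟨j, hj⟩ := hall
    have hred : mtgt (s j) = msrc (s (j + 1)) ∨
        ∃ m, m ∈ M ∧ mtgt (s j) = msrc m ∧ msrc (s (j + 1)) = mtgt m := by
      have hJ : piM M (mtgt (s j)) = piM M (msrc (s (j + 1))) := hs.2.2 j
      by_cases he : mtgt (s j) = msrc (s (j + 1))
      · exact Or.inl he
      · obtain ⟨m, hm, hor⟩ := piM_fiber hM hJ he
        rcases hor with ⟨ha1, ha2⟩ | ⟨ha1, ha2⟩
        · exact Or.inr ⟨m, hm, ha1, ha2⟩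
        · exact absurd ha2 (hj m hm ha1)
    -- rotated system
    set s' : ℕ → MorOf C := fun i => s (i + j) with hs'
    have hcyc' : CycSys M k s' := by
      refine ⟨fun i => ?_, fun i => hs.2.1 (i + j), fun i => ?_⟩
      · show s (i + k + j) = s (i + j)
        rw [show i + k + j = (i + j) + k by omega]
        exact hs.1 (i + j)
      · show Jnt M (s (i + j)) (s (i + 1 + j))
        rw [show i + 1 + j = (i + j) + 1 by omega]
        exact hs.2.2 (i + j)
    have hred0 : mtgt (s' 0) = msrc (s' 1) ∨
        ∃ m, m ∈ M ∧ mtgt (s' 0) = msrc m ∧ msrc (s' 1) = mtgt m := by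
      show mtgt (s (0 + j)) = msrc (s (1 + j)) ∨
        ∃ m, m ∈ M ∧ mtgt (s (0 + j)) = msrc m ∧ msrc (s (1 + j)) = mtgt m
      rw [Nat.zero_add, show 1 + j = j + 1 by omega]
      exact hred
    -- dispose of k = 1
    by_cases hk1 : k = 1
    · subst hk1
      have h10 : s' 1 = s' 0 := by
        have := hcyc'.1 0
        simpa using this
      rcases hred0 with he | ⟨m, hm, h1, h2⟩
      · rw [h10] at he
        exact (hcyc'.2.1 0).2 he.symm
      · rw [h10] at h2
        -- s' 0 : mtgt m ⟶ msrc m , m : msrc m ⟶ mtgt m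
        have h1' : (s' 0).2.1 = m.1 := h1
        have h2' : (s' 0).1 = m.2.1 := h2
        have : m.1 = m.2.1 :=
          hC.2 m.1 m.2.1 m.2.2 (eqToHom h2'.symm ≫ (s' 0).2.2 ≫ eqToHom h1')
        exact (hM.1 m hm).1 this
    · have hk2 : 2 ≤ k := by omega
      obtain ⟨u, hu, husrc, hutgt⟩ :
          ∃ u : MorOf C, okStep M u ∧ msrc u = msrc (s' 0) ∧ mtgt u = mtgt (s' 1) := by
        rcases hred0 with he | ⟨m, hm, h1, h2⟩
        · exact merge1 hC hM (hcyc'.2.1 0) (hcyc'.2.1 1) he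
        · exact merge2 hC hM (hcyc'.2.1 0) (hcyc'.2.1 1) hm h1 h2
      exact IH (k - 1) (by omega) (by omega)
        _ (reduceCyc hk2 hcyc' hu husrc hutgt)

end NoCyc

section Order
variable {C : Type*} [Category C] {M : Set (MorOf C)}

/-- The type of `piM`-fixed points ("class representatives"). -/
def Dsub (M : Set (MorOf C)) := {x : C // piM M x = x}

/-- One-step relation between classes induced by good steps. -/
def Erel (M : Set (MorOf C)) (u v : Dsub M) : Prop :=
  ∃ st : MorOf C, okStep M st ∧ piM M (msrc st) = u.val ∧ piM M (mtgt st) = v.val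

lemma path_of_rtg {u v : Dsub M} (h : Relation.ReflTransGen (Erel M) u v) :
    u = v ∨ ∃ k : ℕ, 0 < k ∧ ∃ s : ℕ → MorOf C, (∀ i, okStep M (s i)) ∧
      (∀ i, i + 1 < k → Jnt M (s i) (s (i + 1))) ∧
      piM M (msrc (s 0)) = u.val ∧ piM M (mtgt (s (k - 1))) = v.val := by
  induction h with
  | refl => exact Or.inl rfl
  | tail hab hbc ih =>
    obtain ⟨st, hst, h1, h2⟩ := hbc
    rcases ih with rfl | ⟨k, hk, s, hok, hJ, hsrc0, htgtk⟩
    · exact Or.inr ⟨1, one_pos, fun _ => st, fun _ => hst,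
        fun i hi => absurd hi (by omega), h1, h2⟩
    · right
      refine ⟨k + 1, by omega, fun i => if i < k then s i else st, ?_, ?_, ?_, ?_⟩
      · intro i; dsimp only; split
        · exact hok i
        · exact hst
      · intro i hi
        by_cases hik : i + 1 < k
        · show Jnt M (if i < k then s i else st) (if i + 1 < k then s (i + 1) else st)
          rw [if_pos (by omega), if_pos hik]
          exact hJ i hik
        · have hik' : i + 1 = k := by omega
          show Jnt M (if i < k then s i else st) (if i + 1 < k then s (i + 1) else st)
          rw [if_pos (by omega), if_neg hik]
          show piM M (mtgt (s i)) = piM M (msrc st)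
          rw [h1, show i = k - 1 by omega]
          exact htgtk
      · show piM M (msrc (if 0 < k then s 0 else st)) = u.val
        rw [if_pos hk]; exact hsrc0
      · show piM M (mtgt (if k + 1 - 1 < k then s (k + 1 - 1) else st)) = _
        rw [if_neg (by omega)]; exact h2

lemma rtg_antisymm (hC : IsAcyclicCat C) (hM : IsMatching M)
    (hnc : IsEmpty (MatchingCycle M)) {u v : Dsub M}
    (huv : Relation.ReflTransGen (Erel M) u v)
    (hvu : Relation.ReflTransGen (Erel M) v u) : u = v := by
  by_contra hne
  rcases path_of_rtg huv with rfl | ⟨k₁, hk₁, s₁, hok₁, hJ₁, hsrc₁, htgt₁⟩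
  · exact hne rfl
  rcases path_of_rtg hvu with rfl | ⟨k₂, hk₂, s₂, hok₂, hJ₂, hsrc₂, htgt₂⟩
  · exact hne rfl
  set K := k₁ + k₂ with hKdef
  have hK : 0 < K := by omega
  set c : ℕ → MorOf C := fun i => if i % K < k₁ then s₁ (i % K) else s₂ (i % K - k₁) with hc
  have hmod : ∀ i : ℕ, (i + 1) % K = (i % K + 1) % K := by
    intro i
    rw [Nat.add_mod i 1 K, Nat.add_mod (i % K) 1 K, Nat.mod_mod_of_dvd]
    exact dvd_refl K
  have hcyc : CycSys M K c := by
    refine ⟨fun i => ?_, fun i => ?_, fun i => ?_⟩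
    · show (if (i + K) % K < k₁ then _ else _) = _
      rw [Nat.add_mod_right]
    · show okStep M (if i % K < k₁ then s₁ (i % K) else s₂ (i % K - k₁))
      split
      · exact hok₁ _
      · exact hok₂ _
    · have hrK : i % K < K := Nat.mod_lt _ hK
      show Jnt M (if i % K < k₁ then s₁ (i % K) else s₂ (i % K - k₁))
          (if (i + 1) % K < k₁ then s₁ ((i + 1) % K) else s₂ ((i + 1) % K - k₁))
      have hstep : (i + 1) % K = (i % K + 1) % K := hmod i
      rcases (by omega : i % K + 1 < K ∨ i % K + 1 = K) with hlt | heq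
      · have h1 : (i + 1) % K = i % K + 1 := by rw [hstep, Nat.mod_eq_of_lt hlt]
        rw [h1]
        rcases (by omega : i % K + 1 < k₁ ∨ i % K + 1 = k₁ ∨ k₁ ≤ i % K) with hA | hA | hA
        · rw [if_pos (by omega), if_pos hA]
          exact hJ₁ _ hA
        · rw [if_pos (by omega), if_neg (by omega)]
          show piM M (mtgt (s₁ (i % K))) = piM M (msrc (s₂ (i % K + 1 - k₁)))
          rw [show i % K + 1 - k₁ = 0 by omega, show i % K = k₁ - 1 by omega]
          rw [htgt₁, hsrc₂]
        · rw [if_neg (by omega), if_neg (by omega)]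
          show piM M (mtgt (s₂ (i % K - k₁))) = piM M (msrc (s₂ (i % K + 1 - k₁)))
          rw [show i % K + 1 - k₁ = (i % K - k₁) + 1 by omega]
          exact hJ₂ _ (by omega)
      · have h1 : (i + 1) % K = 0 := by rw [hstep, heq, Nat.mod_self]
        rw [h1, if_pos hk₁]
        rw [if_neg (by omega)]
        show piM M (mtgt (s₂ (i % K - k₁))) = piM M (msrc (s₁ 0))
        rw [show i % K - k₁ = k₂ - 1 by omega]
        rw [htgt₂, hsrc₁]
  exact noCycSys hC hM hnc K hK c hcyc

end Order

section Build
variable {C : Type*} [Category C] {M : Set (MorOf C)}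

lemma exists_good_order (hC : IsAcyclicCat C) (hM : IsMatching M)
    (hnc : IsEmpty (MatchingCycle M)) :
    ∃ r : C → C → Prop, IsLinearOrder C r ∧
      (∀ x y : C, x ≠ y → (x ⟶ y) → r x y) ∧
      (∀ m ∈ M, r (msrc m) (mtgt m) ∧
        ∀ z : C, r (msrc m) z → r z (mtgt m) → z = msrc m ∨ z = mtgt m) := by
  classical
  have hpo : IsPartialOrder (Dsub M) (Relation.ReflTransGen (Erel M)) :=
    { refl := fun a => Relation.ReflTransGen.refl
      trans := fun a b c hab hbc => hab.trans hbc
      antisymm := fun a b hab hba => rtg_antisymm hC hM hnc hab hba }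
  obtain ⟨sL, hsL, hle⟩ := @extend_partialOrder (Dsub M) _ hpo
  haveI := hsL
  let Dof : C → Dsub M := fun x => ⟨piM M x, piM_idem hM x⟩
  let r : C → C → Prop := fun x y =>
    (piM M x = piM M y ∧ (x = y ∨ (piM M x = x ∧ piM M y ≠ y))) ∨
    (piM M x ≠ piM M y ∧ sL (Dof x) (Dof y))
  have hEstep : ∀ {x y : C}, x ≠ y → (x ⟶ y) → piM M x ≠ piM M y →
      Erel M (Dof x) (Dof y) := by
    intro x y hne f hpi
    refine ⟨⟨x, y, f⟩, ⟨?_, hne⟩, rfl, rfl⟩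
    intro hmem
    apply hpi
    have h1 : piM M x = x := piM_src hM hmem
    have h2 : piM M y = x := piM_tgt hM hmem
    rw [h1, h2]
  have hS : ∀ {x y : C}, x ≠ y → (x ⟶ y) → piM M x ≠ piM M y →
      sL (Dof x) (Dof y) := fun hne f hpi =>
    hle _ _ (Relation.ReflTransGen.single (hEstep hne f hpi))
  have hrefl : ∀ x : C, r x x := fun x => Or.inl ⟨rfl, Or.inl rfl⟩
  have htrans : ∀ x y z : C, r x y → r y z → r x z := by
    intro x y z hxy hyz
    rcases hxy with ⟨h1, h2⟩ | ⟨h1, h2⟩ <;> rcases hyz with ⟨h3, h4⟩ | ⟨h3, h4⟩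
    · left
      refine ⟨h1.trans h3, ?_⟩
      rcases h2 with rfl | ⟨ha, hb⟩
      · exact h4
      · rcases h4 with rfl | ⟨hc, hd⟩
        · exact Or.inr ⟨ha, hb⟩
        · exact absurd hc hb
    · right
      refine ⟨fun h => h3 (h1.symm.trans h), ?_⟩
      have hD : Dof x = Dof y := Subtype.ext h1
      rw [hD]; exact h4
    · right
      refine ⟨fun h => h1 (h.trans h3.symm), ?_⟩
      have hD : Dof y = Dof z := Subtype.ext h3
      rw [← hD]; exact h2
    · right
      refine ⟨?_, trans_of sL h2 h4⟩
      intro h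
      apply h1
      have hD : Dof x = Dof z := Subtype.ext h
      rw [← hD] at h4
      exact congrArg Subtype.val (antisymm_of sL h2 h4)
  have hanti : ∀ x y : C, r x y → r y x → x = y := by
    intro x y hxy hyx
    rcases hxy with ⟨h1, h2⟩ | ⟨h1, h2⟩ <;> rcases hyx with ⟨h3, h4⟩ | ⟨h3, h4⟩
    · rcases h2 with rfl | ⟨ha, hb⟩
      · rfl
      · rcases h4 with rfl | ⟨hc, hd⟩
        · rfl
        · exact absurd hc hb
    · exact absurd h1 (fun h => h3 h.symm)
    · exact absurd h3 (fun h => h1 h.symm)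
    · exfalso
      apply h1
      exact congrArg Subtype.val (antisymm_of sL h2 h4)
  have htotal : ∀ x y : C, r x y ∨ r y x := by
    intro x y
    by_cases hpi : piM M x = piM M y
    · by_cases hxy : x = y
      · exact Or.inl (Or.inl ⟨hpi, Or.inl hxy⟩)
      · obtain ⟨m, hm, hor⟩ := piM_fiber hM hpi hxy
        rcases hor with ⟨h1, h2⟩ | ⟨h1, h2⟩
        · left; refine Or.inl ⟨hpi, Or.inr ⟨?_, ?_⟩⟩
          · rw [h1]; exact piM_src hM hm
          · rw [h2, piM_tgt hM hm]; exact (hM.1 m hm).1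
        · right; refine Or.inl ⟨hpi.symm, Or.inr ⟨?_, ?_⟩⟩
          · rw [h2]; exact piM_src hM hm
          · rw [h1, piM_tgt hM hm]; exact (hM.1 m hm).1
    · rcases total_of sL (Dof x) (Dof y) with h | h
      · exact Or.inl (Or.inr ⟨hpi, h⟩)
      · exact Or.inr (Or.inr ⟨fun hh => hpi hh.symm, h⟩)
  refine ⟨r, { refl := hrefl, trans := htrans, antisymm := hanti, total := htotal }, ?_, ?_⟩
  · -- linear extension property
    intro x y hxy f
    by_cases hpi : piM M x = piM M y
    · obtain ⟨m, hm, hor⟩ := piM_fiber hM hpi hxy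
      rcases hor with ⟨h1, h2⟩ | ⟨h1, h2⟩
      · left
        refine ⟨hpi, Or.inr ⟨?_, ?_⟩⟩
        · rw [h1]; exact piM_src hM hm
        · rw [h2, piM_tgt hM hm]; exact (hM.1 m hm).1
      · exfalso
        have h1' : x = m.2.1 := h1
        have h2' : y = m.1 := h2
        exact (hM.1 m hm).1
          (hC.2 m.1 m.2.1 m.2.2 (eqToHom h1'.symm ≫ f ≫ eqToHom h2'))
    · exact Or.inr ⟨hpi, hS hxy f hpi⟩
  · -- matched pairs are consecutive
    intro m hm
    have hps : piM M (msrc m) = msrc m := piM_src hM hm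
    have hpt : piM M (mtgt m) = msrc m := piM_tgt hM hm
    constructor
    · left
      exact ⟨hps.trans hpt.symm, Or.inr ⟨hps, by rw [hpt]; exact (hM.1 m hm).1⟩⟩
    · intro z hz1 hz2
      by_cases hpz : piM M z = msrc m
      · exact piM_eq_src hM hm hpz
      · exfalso
        have hz1' : sL (Dof (msrc m)) (Dof z) := by
          rcases hz1 with ⟨h1, _⟩ | ⟨_, h2⟩
          · exact absurd (h1.symm.trans hps) hpz
          · exact h2
        have hz2' : sL (Dof z) (Dof (msrc m)) := by
          rcases hz2 with ⟨h1, _⟩ | ⟨h1, h2⟩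
          · exact absurd (h1.trans hpt) hpz
          · have hD : Dof (mtgt m) = Dof (msrc m) := Subtype.ext (hpt.trans hps.symm)
            rw [← hD]; exact h2
        exact hpz ((congrArg Subtype.val (antisymm_of sL hz2' hz1')).trans hps)

end Build

section Final
variable {C : Type*} [Category C] {M : Set (MorOf C)}

lemma add_one_mod' (K x : ℕ) : (x + 1) % K = (x % K + 1) % K := by
  rw [Nat.add_mod x 1 K, Nat.add_mod (x % K) 1 K, Nat.mod_mod_of_dvd _ dvd_rfl]

lemma no_cycle_of_order (hM : IsMatching M)
    (hA : ∀ (x y : C) (f g : x ⟶ y), (⟨x, y, f⟩ : MorOf C) ∈ M → g = f)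
    {r : C → C → Prop} (hlin : IsLinearOrder C r)
    (hext : ∀ x y : C, x ≠ y → (x ⟶ y) → r x y)
    (hcons : ∀ m ∈ M, r (msrc m) (mtgt m) ∧
      ∀ z : C, r (msrc m) z → r z (mtgt m) → z = msrc m ∨ z = mtgt m)
    (c : MatchingCycle M) : False := by
  haveI := hlin
  have succlt : ∀ i : Fin c.n, ((i : ℕ) + 1) % c.n < c.n := fun i => Nat.mod_lt _ c.npos
  let succ : Fin c.n → Fin c.n := fun i => ⟨((i : ℕ) + 1) % c.n, succlt i⟩
  have hbne : ∀ i : Fin c.n, msrc (c.b i) ≠ mtgt (c.b (succ i)) := by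
    intro i
    by_cases hbb : c.b i = c.b (succ i)
    · rw [hbb]; exact (hM.1 _ (c.hb (succ i))).1
    · exact (hM.2 _ (c.hb i) _ (c.hb (succ i)) hbb).2.1
  have hmor : ∀ i : Fin c.n, r (msrc (c.b i)) (mtgt (c.b (succ i))) := by
    intro i
    have h1 : msrc (c.a (succ i)) = msrc (c.b i) := c.hsrc i
    have h2 : mtgt (c.a (succ i)) = mtgt (c.b (succ i)) := c.htgt (succ i)
    have h1' : msrc (c.b i) = (c.a (succ i)).1 := h1.symm
    have h2' : (c.a (succ i)).2.1 = mtgt (c.b (succ i)) := h2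
    exact hext _ _ (hbne i) (eqToHom h1' ≫ (c.a (succ i)).2.2 ≫ eqToHom h2')
  have hstep : ∀ i : Fin c.n, r (msrc (c.b i)) (msrc (c.b (succ i))) := by
    intro i
    have hm := hcons _ (c.hb (succ i))
    rcases total_of r (msrc (c.b (succ i))) (msrc (c.b i)) with h | h
    · rcases hm.2 _ h (hmor i) with he | he
      · rw [he]; exact refl_of r _
      · exact absurd he (hbne i)
    · exact h
  have hchain : ∀ (i : Fin c.n) (j : ℕ),
      r (msrc (c.b i)) (msrc (c.b ⟨((i : ℕ) + j) % c.n, Nat.mod_lt _ c.npos⟩)) := by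
    intro i j
    induction j with
    | zero =>
      have he : (⟨((i : ℕ) + 0) % c.n, Nat.mod_lt _ c.npos⟩ : Fin c.n) = i :=
        Fin.ext (by simp [Nat.mod_eq_of_lt i.isLt])
      rw [he]; exact refl_of r _
    | succ j ih =>
      have hs := hstep ⟨((i : ℕ) + j) % c.n, Nat.mod_lt _ c.npos⟩
      have he : succ (⟨((i : ℕ) + j) % c.n, Nat.mod_lt _ c.npos⟩ : Fin c.n)
          = ⟨((i : ℕ) + (j + 1)) % c.n, Nat.mod_lt _ c.npos⟩ := by
        apply Fin.ext
        show (((i : ℕ) + j) % c.n + 1) % c.n = ((i : ℕ) + (j + 1)) % c.n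
        rw [show (i : ℕ) + (j + 1) = ((i : ℕ) + j) + 1 from rfl, add_one_mod' c.n ((i : ℕ) + j)]
      rw [he] at hs
      exact trans_of r ih hs
  let i0 : Fin c.n := ⟨0, c.npos⟩
  have hball : ∀ i : Fin c.n, c.b i = c.b i0 := by
    intro i
    apply src_inj hM (c.hb i) (c.hb i0)
    apply antisymm_of r
    · have h := hchain i (c.n - (i : ℕ))
      have he : (⟨((i : ℕ) + (c.n - (i : ℕ))) % c.n, Nat.mod_lt _ c.npos⟩ : Fin c.n) = i0 := by
        apply Fin.ext
        show ((i : ℕ) + (c.n - (i : ℕ))) % c.n = 0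
        rw [show (i : ℕ) + (c.n - (i : ℕ)) = c.n by omega, Nat.mod_self]
      rwa [he] at h
    · have h := hchain i0 (i : ℕ)
      have he : (⟨((i0 : ℕ) + (i : ℕ)) % c.n, Nat.mod_lt _ c.npos⟩ : Fin c.n) = i := by
        apply Fin.ext
        show (0 + (i : ℕ)) % c.n = (i : ℕ)
        rw [Nat.zero_add, Nat.mod_eq_of_lt i.isLt]
      rwa [he] at h
  -- now the step a (succ i0) coincides with the matched morphism, contradiction
  set i1 := succ i0 with hi1
  have h1 : (c.a i1).1 = (c.b i0).1 := c.hsrc i0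
  have h2 : (c.a i1).2.1 = (c.b i0).2.1 := by
    have h := c.htgt i1
    rw [hball i1] at h
    exact h
  have hg := hA (c.b i0).1 (c.b i0).2.1 (c.b i0).2.2
    (eqToHom h1.symm ≫ (c.a i1).2.2 ≫ eqToHom h2) (c.hb i0)
  have : c.a i1 = c.b i0 := by
    apply morOf_ext h1 h2
    rw [← hg]
    simp
  exact c.ha i1 (this ▸ c.hb i0)

end Final

theorem stmt4 {C : Type*} [Category C] (hC : IsAcyclicCat C)
    (M : Set (MorOf C)) (hM : IsMatching M) :
    -- M is acyclic (has no cycles) iff (a) and (b):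
    IsEmpty (MatchingCycle M) ↔
      ((∀ (x y : C) (f g : x ⟶ y), (⟨x, y, f⟩ : MorOf C) ∈ M → g = f) ∧
       ∃ r : C → C → Prop, IsLinearOrder C r ∧
         (∀ x y : C, x ≠ y → (x ⟶ y) → r x y) ∧
         (∀ m ∈ M, r (msrc m) (mtgt m) ∧
            ∀ z : C, r (msrc m) z → r z (mtgt m) → z = msrc m ∨ z = mtgt m)) := by
  constructor
  · intro hnc
    refine ⟨?_, exists_good_order hC hM hnc⟩
    intro x y f g hf
    by_contra hg
    have hmemg : (⟨x, y, g⟩ : MorOf C) ∉ M := by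
      intro hmem
      by_cases he : (⟨x, y, g⟩ : MorOf C) = ⟨x, y, f⟩
      · simp only [Sigma.mk.inj_iff, heq_eq_eq, true_and] at he
        exact hg he
      · exact (hM.2 _ hmem _ hf he).1 rfl
    exact hnc.elim (MatchingCycle.mk 1 one_pos (fun _ => ⟨x, y, g⟩) (fun _ => ⟨x, y, f⟩)
      (fun _ => hmemg) (fun _ => hf) (fun _ => rfl) (fun _ => rfl))
  · rintro ⟨hA, r, hlin, hext, hcons⟩
    exact ⟨fun c => no_cycle_of_order hM hA hlin hext hcons c⟩
end

section
/- (Patchwork Lemma for acyclic categories) Let φ : 𝒞 → 𝒞' be a functor between acyclic categories, and suppose that for each object c of 𝒞' an acyclic matching 𝔐_c of the fiber φ⁻¹(c) (the subcategory of objects mapped to c and morphisms mapped to id_c) is given. Then the union 𝔐 = ⋃_{c ∈ Ob(𝒞')} 𝔐_c is an acyclic matching of 𝒞. -/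
open CategoryTheory

/-- Indecomposability of `m` relative to a class `O` of objects (decompositions through
objects of `O` are forbidden).  For `O = univ` this is indecomposability in `C`. -/
def IndecompIn {C : Type*} [Category C] (O : Set C) (m : MorOf C) : Prop :=
  m.1 ≠ m.2.1 ∧
  ∀ (z : C) (f : m.1 ⟶ z) (g : z ⟶ m.2.1), z ∈ O → f ≫ g = m.2.2 → z = m.1 ∨ z = m.2.1

/-- The matching conditions for `M`, relative to a class `O` of objects. -/
def IsMatchingIn {C : Type*} [Category C] (O : Set C) (M : Set (MorOf C)) : Prop :=
  (∀ m ∈ M, msrc m ∈ O ∧ mtgt m ∈ O ∧ IndecompIn O m) ∧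
  ∀ m ∈ M, ∀ m' ∈ M, m ≠ m' →
    msrc m ≠ msrc m' ∧ msrc m ≠ mtgt m' ∧ mtgt m ≠ msrc m' ∧ mtgt m ≠ mtgt m'

/-- An alternating cycle of the matching `M` all of whose morphisms have endpoints in
the class `O` of objects. -/
structure AltCycle {C : Type*} [Category C] (O : Set C) (M : Set (MorOf C)) where
  n : ℕ
  npos : 0 < n
  a : Fin n → MorOf C
  b : Fin n → MorOf C
  haO : ∀ i, msrc (a i) ∈ O ∧ mtgt (a i) ∈ O
  ha : ∀ i, a i ∉ M
  hb : ∀ i, b i ∈ M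
  htgt : ∀ i, mtgt (a i) = mtgt (b i)
  hsrc : ∀ i : Fin n, msrc (a ⟨((i : ℕ) + 1) % n, Nat.mod_lt _ npos⟩) = msrc (b i)

/-- The fiber φ⁻¹(c): objects mapped to `c` (in an acyclic target category, morphisms
between such objects are automatically mapped to the identity of `c`). -/
def fiberObj {C C' : Type*} [Category C] [Category C'] (φ : C ⥤ C') (c : C') : Set C :=
  {x | φ.obj x = c}

theorem stmt5 {C C' : Type*} [Category C] [Category C']
    (hC : IsAcyclicCat C) (hC' : IsAcyclicCat C')
    (φ : C ⥤ C')
    (M : C' → Set (MorOf C))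
    -- each 𝔐_c is an acyclic matching of the fiber φ⁻¹(c):
    (hMfib : ∀ c : C', IsMatchingIn (fiberObj φ c) (M c))
    (hMacyclic : ∀ c : C', IsEmpty (AltCycle (fiberObj φ c) (M c))) :
    -- then the union is an acyclic matching of 𝒞:
    IsMatchingIn Set.univ (⋃ c : C', M c) ∧
      IsEmpty (AltCycle Set.univ (⋃ c : C', M c)) := by
  constructor
  · constructor
    · intro m hm
      rw [Set.mem_iUnion] at hm
      obtain ⟨c, hmc⟩ := hm
      obtain ⟨hs, ht, hind⟩ := (hMfib c).1 m hmc
      have hs' : φ.obj m.1 = c := hs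
      have ht' : φ.obj m.2.1 = c := ht
      refine ⟨trivial, trivial, hind.1, ?_⟩
      intro z f g _ hfg
      have hz : φ.obj z = c := by
        have heq := hC'.2 (φ.obj m.1) (φ.obj z) (φ.map f)
          (φ.map g ≫ eqToHom (ht'.trans hs'.symm))
        rw [← heq]; exact hs'
      exact hind.2 z f g hz hfg
    · intro m hm m' hm' hne
      rw [Set.mem_iUnion] at hm hm'
      obtain ⟨c, hmc⟩ := hm
      obtain ⟨c', hmc'⟩ := hm'
      by_cases h : c = c'
      · subst h; exact (hMfib c).2 m hmc m' hmc' hne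
      · obtain ⟨hs, ht, -⟩ := (hMfib c).1 m hmc
        obtain ⟨hs', ht', -⟩ := (hMfib c').1 m' hmc'
        have hs : φ.obj (msrc m) = c := hs
        have ht : φ.obj (mtgt m) = c := ht
        have hs' : φ.obj (msrc m') = c' := hs'
        have ht' : φ.obj (mtgt m') = c' := ht'
        refine ⟨?_, ?_, ?_, ?_⟩ <;> intro he <;> apply h
        · rw [← hs, he, hs']
        · rw [← hs, he, ht']
        · rw [← ht, he, hs']
        · rw [← ht, he, ht']
  · constructor
    intro cyc
    set n := cyc.n with hn
    have npos := cyc.npos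
    -- choose the fiber of each b i
    have hbc : ∀ i : Fin n, ∃ c, cyc.b i ∈ M c := by
      intro i
      have := cyc.hb i
      rwa [Set.mem_iUnion] at this
    choose cfib hcfib using hbc
    have hbs : ∀ i, φ.obj (msrc (cyc.b i)) = cfib i :=
      fun i => ((hMfib (cfib i)).1 _ (hcfib i)).1
    have hbt : ∀ i, φ.obj (mtgt (cyc.b i)) = cfib i :=
      fun i => ((hMfib (cfib i)).1 _ (hcfib i)).2.1
    set d : Fin n → C' := fun i => φ.obj (msrc (cyc.a i)) with hd
    set succ : Fin n → Fin n := fun i => ⟨((i : ℕ) + 1) % n, Nat.mod_lt _ npos⟩ with hsucc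
    have htd : ∀ i, φ.obj (mtgt (cyc.a i)) = d (succ i) := by
      intro i
      rw [cyc.htgt i, hbt i, ← hbs i]
      exact congrArg φ.obj (cyc.hsrc i).symm
    have e : ∀ i : Fin n, (d i ⟶ d (succ i)) := fun i =>
      φ.map (cyc.a i).2.2 ≫ eqToHom (htd i)
    have fwd : ∀ k : ℕ, ∀ hk : k < n, Nonempty (d ⟨0, npos⟩ ⟶ d ⟨k, hk⟩) := by
      intro k
      induction k with
      | zero => intro hk; exact ⟨𝟙 _⟩
      | succ j ih =>
        intro hk
        have hj : j < n := Nat.lt_of_succ_lt hk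
        obtain ⟨f⟩ := ih hj
        have hsj : succ ⟨j, hj⟩ = ⟨j + 1, hk⟩ := Fin.ext (Nat.mod_eq_of_lt hk)
        exact ⟨f ≫ e ⟨j, hj⟩ ≫ eqToHom (congrArg d hsj)⟩
    have bwd : ∀ k : ℕ, ∀ i : Fin n, (i : ℕ) + k + 1 = n →
        Nonempty (d i ⟶ d ⟨0, npos⟩) := by
      intro k
      induction k with
      | zero =>
        intro i hi
        have hsi : succ i = ⟨0, npos⟩ := by
          apply Fin.ext
          show ((i : ℕ) + 1) % n = 0
          rw [show (i : ℕ) + 1 = n by omega, Nat.mod_self]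
        exact ⟨e i ≫ eqToHom (congrArg d hsi)⟩
      | succ j ih =>
        intro i hi
        have hi1 : (i : ℕ) + 1 < n := by omega
        have hsi : succ i = ⟨(i : ℕ) + 1, hi1⟩ := Fin.ext (Nat.mod_eq_of_lt hi1)
        obtain ⟨f⟩ := ih ⟨(i : ℕ) + 1, hi1⟩ (by simp; omega)
        exact ⟨(e i ≫ eqToHom (congrArg d hsi)) ≫ f⟩
    have hdconst : ∀ i : Fin n, d i = d ⟨0, npos⟩ := by
      intro i
      obtain ⟨f⟩ := fwd (i : ℕ) i.isLt
      obtain ⟨g⟩ := bwd (n - 1 - (i : ℕ)) i (by omega)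
      have : (⟨(i : ℕ), i.isLt⟩ : Fin n) = i := Fin.ext rfl
      rw [this] at f
      exact (hC'.2 _ _ f g).symm
    set c0 := d ⟨0, npos⟩ with hc0
    have hcfib0 : ∀ i : Fin n, cfib i = c0 := by
      intro i
      rw [← hbs i, ← cyc.hsrc i]
      exact hdconst (succ i)
    -- build an alternating cycle in the fiber of c0
    have : AltCycle (fiberObj φ c0) (M c0) :=
      { n := n
        npos := npos
        a := cyc.a
        b := cyc.b
        haO := by
          intro i
          constructor
          · exact hdconst i
          · show φ.obj (mtgt (cyc.a i)) = c0
            rw [htd i]; exact hdconst (succ i)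
        ha := by
          intro i hi
          exact cyc.ha i (Set.mem_iUnion.mpr ⟨c0, hi⟩)
        hb := by
          intro i
          have := hcfib i
          rwa [hcfib0 i] at this
        htgt := cyc.htgt
        hsrc := cyc.hsrc }
    exact (hMacyclic c0).false this
end

section
/- Let 𝒟 : ℐ → AC be a geometric diagram of acyclic categories. Then the relation ∼ on the disjoint union of morphism sets ⨆_{X ∈ Ob ℐ} Mor(𝒟(X)), defined by x ∼ y iff there exist Z ∈ Ob(ℐ), a morphism z ∈ Mor(𝒟(Z)), and morphisms f_X : Z → X, f_Y : Z → Y in ℐ with 𝒟(f_X)(z) = x and 𝒟(f_Y)(z) = y, is an equivalence relation. -/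
open CategoryTheory

universe v u

/-- Application of the functor `𝒟(f)` to a bundled morphism. -/
def mapMor {I : Type u} [Category.{v} I] (D : I ⥤ Cat.{v, u}) {X Y : I} (f : X ⟶ Y)
    (m : MorOf (D.obj X)) : MorOf (D.obj Y) :=
  ⟨(D.map f).toFunctor.obj m.1, (D.map f).toFunctor.obj m.2.1, (D.map f).toFunctor.map m.2.2⟩

/-- A geometric diagram of acyclic categories (Definition 4.2 of the paper):
(i) every 𝒟(X) is ranked and every 𝒟(f) is rank-preserving; (ii) every morphism x of
every 𝒟(X) admits a universal lift x̂. -/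
def IsGeometric {I : Type u} [Category.{v} I] (D : I ⥤ Cat.{v, u}) : Prop :=
  (∃ rk : ∀ X : I, (D.obj X) → ℕ,
      (∀ X : I, (∃ x₀ : D.obj X, rk X x₀ = 0) ∧
        ∀ m : MorOf (D.obj X), Indecomp m → rk X m.2.1 = rk X m.1 + 1) ∧
      (∀ (X Y : I) (f : X ⟶ Y) (x : D.obj X), rk Y ((D.map f).toFunctor.obj x) = rk X x)) ∧
  (∀ (X : I) (x : MorOf (D.obj X)),
      ∃ (Xh : I) (f : Xh ⟶ X) (xh : MorOf (D.obj Xh)),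
        mapMor D f xh = x ∧
        ∀ (Y : I) (g : Y ⟶ X) (y : MorOf (D.obj Y)), mapMor D g y = x →
          ∃ gh : Xh ⟶ Y, mapMor D gh xh = y)

/-- The relation ∼ on the disjoint union of the morphism sets of the 𝒟(X). -/
def morRel {I : Type u} [Category.{v} I] (D : I ⥤ Cat.{v, u}) :
    (Σ X : I, MorOf (D.obj X)) → (Σ X : I, MorOf (D.obj X)) → Prop :=
  fun a b =>
    ∃ (Z : I) (z : MorOf (D.obj Z)) (f : Z ⟶ a.1) (g : Z ⟶ b.1),
      mapMor D f z = a.2 ∧ mapMor D g z = b.2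

section

variable {I : Type u} [Category.{v} I] (D : I ⥤ Cat.{v, u})

lemma mapMor_id {X : I} (m : MorOf (D.obj X)) : mapMor D (𝟙 X) m = m := by
  unfold mapMor; rw [D.map_id]; rfl

lemma mapMor_comp {X Y Z : I} (f : X ⟶ Y) (g : Y ⟶ Z) (m : MorOf (D.obj X)) :
    mapMor D (f ≫ g) m = mapMor D g (mapMor D f m) := by
  unfold mapMor; rw [D.map_comp]; rfl

def HasUniversalLifts : Prop :=
  ∀ (X : I) (x : MorOf (D.obj X)),
    ∃ (Xh : I) (f : Xh ⟶ X) (xh : MorOf (D.obj Xh)),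
      mapMor D f xh = x ∧
      ∀ (Y : I) (g : Y ⟶ X) (y : MorOf (D.obj Y)), mapMor D g y = x →
        ∃ gh : Xh ⟶ Y, mapMor D gh xh = y

variable {D}

lemma IsGeometric.hasUniversalLifts (hD : IsGeometric D) : HasUniversalLifts D :=
  hD.2

lemma morRel_refl (a : Σ X : I, MorOf (D.obj X)) : morRel D a a :=
  ⟨a.1, a.2, 𝟙 a.1, 𝟙 a.1, mapMor_id D a.2, mapMor_id D a.2⟩

lemma morRel_symm {a b : Σ X : I, MorOf (D.obj X)} : morRel D a b → morRel D b a :=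
  fun ⟨Z, z, f, g, hf, hg⟩ => ⟨Z, z, g, f, hg, hf⟩

/-- If `x ∼ y` via `z` and `y ∼ w` via `z'`, then `z` and `z'` are both images of the universal
lift `ŷ` of `y`, which is therefore a common preimage of `x` and `w`. -/
lemma morRel_trans (hD : HasUniversalLifts D) {a b c : Σ X : I, MorOf (D.obj X)} :
    morRel D a b → morRel D b c → morRel D a c := by
  rintro ⟨Z, z, f, g, hf, hg⟩ ⟨Z', z', f', g', hf', hg'⟩
  obtain ⟨Yh, -, yh, -, huniv⟩ := hD b.1 b.2
  obtain ⟨q, hq⟩ := huniv Z g z hg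
  obtain ⟨q', hq'⟩ := huniv Z' f' z' hf'
  exact ⟨Yh, yh, q ≫ f, q' ≫ g', by rw [mapMor_comp, hq, hf], by rw [mapMor_comp, hq', hg']⟩

end

theorem stmt6_general {I : Type u} [Category.{v} I]
    (D : I ⥤ Cat.{v, u})
    (hgeom : IsGeometric D) :
    Equivalence (morRel D) :=
  ⟨morRel_refl, morRel_symm, morRel_trans hgeom.hasUniversalLifts⟩

theorem stmt6 {I : Type u} [Category.{v} I] (hI : IsAcyclicCat I)
    (D : I ⥤ Cat.{v, u}) (hD : ∀ X : I, IsAcyclicCat (D.obj X))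
    (hgeom : IsGeometric D) :
    Equivalence (morRel D) :=
  stmt6_general D hgeom
end

section
/- With the setup of the adapted basis lemma: let u₁, …, u_d be a basis of ℤ^d with u₁, …, u_{i−1} a basis of Λ_i for each i, and suppose ⟨uᵢ, αᵢ⟩ > 0 for all i. Set lᵢ := ⟨uᵢ, αᵢ⟩ and Q := { x ∈ ℝ^d : 0 ≤ ⟨x, αᵢ⟩ < lᵢ for all i = 1, …, d }. Then Q is a fundamental region for the translation action of ℤ^d on ℝ^d via x ↦ x + u, i.e. Q contains exactly one point of each orbit of the lattice generated by u₁, …, u_d (which equals ℤ^d): for every x ∈ ℝ^d there is a unique y ∈ Q with x − y ∈ ℤ^d. -/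
open Matrix

/-!
STATEMENT 10: with an adapted basis u₁,…,u_d of ℤ^d (u_i ⊥ α_k for i < k,
l_i := ⟨u_i, α_i⟩ > 0), the region Q = { x ∈ ℝ^d : 0 ≤ ⟨x, αᵢ⟩ < lᵢ ∀i } is a
fundamental region for the translation action of ℤ^d on ℝ^d: every point of ℝ^d is
equivalent to exactly one point of Q modulo ℤ^d.
-/

/-- The real pairing of a real vector with an integer vector. -/
def rdot {d : ℕ} (x : Fin d → ℝ) (v : Fin d → ℤ) : ℝ := ∑ i, x i * (v i : ℝ)

lemma key : ∀ (d : ℕ) (M : Matrix (Fin d) (Fin d) ℤ),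
    (∀ i k : Fin d, i < k → M i k = 0) → (∀ k, 0 < M k k) →
    ∀ t : Fin d → ℝ,
    ∃! n : Fin d → ℤ, ∀ k, 0 ≤ t k - ∑ i, (n i : ℝ) * (M i k : ℝ) ∧
      t k - ∑ i, (n i : ℝ) * (M i k : ℝ) < (M k k : ℝ) := by
  intro d
  induction d with
  | zero =>
      intro M _ _ t
      exact ⟨fun k => 0, fun k => k.elim0, fun m _ => Subsingleton.elim m _⟩
  | succ d ih =>
      intro M htri hdiag t
      set L : ℤ := M (Fin.last d) (Fin.last d) with hLdef
      have hL : (0:ℝ) < (L:ℝ) := by exact_mod_cast hdiag (Fin.last d)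
      set nd : ℤ := ⌊ t (Fin.last d) / (L:ℝ) ⌋ with hnd
      -- floor properties
      have hfl : ∀ m : ℤ, (0 ≤ t (Fin.last d) - (m:ℝ) * (L:ℝ) ∧
          t (Fin.last d) - (m:ℝ) * (L:ℝ) < (L:ℝ)) ↔ m = nd := by
        intro m
        constructor
        · rintro ⟨h1, h2⟩
          have hm1 : (m:ℝ) ≤ t (Fin.last d) / (L:ℝ) := by
            rw [le_div_iff₀ hL]; linarith
          have hm2 : t (Fin.last d) / (L:ℝ) < (m:ℝ) + 1 := by
            rw [div_lt_iff₀ hL]; push_cast; nlinarith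
          have := Int.floor_eq_iff.mpr ⟨hm1, hm2⟩
          omega
        · rintro rfl
          constructor
          · have := Int.floor_le (t (Fin.last d) / (L:ℝ))
            rw [le_div_iff₀ hL] at this
            linarith [this]
          · have := Int.lt_floor_add_one (t (Fin.last d) / (L:ℝ))
            rw [div_lt_iff₀ hL] at this
            push_cast at this ⊢
            nlinarith
      -- the reduced problem
      set M' : Matrix (Fin d) (Fin d) ℤ := fun i k => M i.castSucc k.castSucc with hM'
      set t' : Fin d → ℝ := fun k => t k.castSucc - (nd:ℝ) * (M (Fin.last d) k.castSucc : ℝ) with ht'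
      obtain ⟨n', hn', hn'uniq⟩ := ih M' (fun i k h => htri _ _ (by simpa using h))
        (fun k => hdiag k.castSucc) t'
      -- sum decomposition
      have hsum : ∀ (m : Fin (d+1) → ℤ) (k : Fin (d+1)),
          ∑ i, (m i : ℝ) * (M i k : ℝ)
            = (∑ i : Fin d, (m i.castSucc : ℝ) * (M i.castSucc k : ℝ)) +
              (m (Fin.last d) : ℝ) * (M (Fin.last d) k : ℝ) := by
        intro m k
        rw [Fin.sum_univ_castSucc]
      have hcast_zero : ∀ i : Fin d, M i.castSucc (Fin.last d) = 0 := by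
        intro i; exact htri _ _ (Fin.castSucc_lt_last i)
      refine ⟨Fin.snoc n' nd, ?_, ?_⟩
      · intro k
        refine Fin.lastCases ?_ ?_ k
        · -- k = last
          rw [hsum]
          simp only [Fin.snoc_castSucc, Fin.snoc_last]
          simp only [hcast_zero]
          simp only [Int.cast_zero, mul_zero, Finset.sum_const_zero, zero_add]
          exact (hfl nd).mpr rfl
        · intro k
          rw [hsum]
          simp only [Fin.snoc_castSucc, Fin.snoc_last]
          have := hn' k
          simp only [ht', hM'] at this
          constructor <;> [linarith [this.1]; (exact by linarith [this.2])]
      · intro m hm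
        have hmlast : m (Fin.last d) = nd := by
          have := hm (Fin.last d)
          rw [hsum] at this
          simp only [hcast_zero, Int.cast_zero, mul_zero, Finset.sum_const_zero, zero_add] at this
          exact (hfl _).mp this
        have hinit : Fin.init m = n' := by
          apply hn'uniq
          intro k
          have := hm k.castSucc
          rw [hsum, hmlast] at this
          simp only [Fin.init, ht', hM']
          constructor <;> [linarith [this.1]; (exact by linarith [this.2])]
        have : m = Fin.snoc (Fin.init m) (m (Fin.last d)) := (Fin.snoc_init_self m).symm
        rw [this, hinit, hmlast]

lemma dot_sum {d : ℕ} (n : Fin d → ℤ) (u : Fin d → Fin d → ℤ) (w : Fin d → ℤ) :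
    (∑ i, n i • u i) ⬝ᵥ w = ∑ i, n i * (u i ⬝ᵥ w) := by
  simp only [dotProduct, Finset.sum_apply, Pi.smul_apply, smul_eq_mul,
    Finset.sum_mul, Finset.mul_sum, mul_assoc]
  exact Finset.sum_comm

lemma rdot_sub {d : ℕ} (x : Fin d → ℝ) (v : Fin d → ℤ) (w : Fin d → ℤ) :
    rdot (fun k => x k - (v k : ℝ)) w = rdot x w - ((v ⬝ᵥ w : ℤ) : ℝ) := by
  simp only [rdot, dotProduct, sub_mul, Finset.sum_sub_distrib]
  push_cast
  ring


theorem stmt10 (d : ℕ) (α u : Fin d → (Fin d → ℤ))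
    (hα : LinearIndependent ℚ (fun i => (fun k => (α i k : ℚ))))
    -- u is a basis of ℤ^d
    (hbasis : ∃ b : Module.Basis (Fin d) ℤ (Fin d → ℤ), ⇑b = u)
    -- adapted: ⟨uᵢ, α_k⟩ = 0 for i < k
    (hadapt : ∀ i k : Fin d, (i : ℕ) < (k : ℕ) → (u i) ⬝ᵥ (α k) = 0)
    -- normalization lᵢ = ⟨uᵢ, αᵢ⟩ > 0
    (hpos : ∀ i : Fin d, 0 < (u i) ⬝ᵥ (α i)) :
    -- Q = {x : ∀ i, 0 ≤ ⟨x,αᵢ⟩ < lᵢ} contains exactly one point of each ℤ^d-orbit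
    ∀ x : Fin d → ℝ, ∃! y : Fin d → ℝ,
      (∀ i : Fin d, 0 ≤ rdot y (α i) ∧ rdot y (α i) < (((u i) ⬝ᵥ (α i) : ℤ) : ℝ)) ∧
      ∃ v : Fin d → ℤ, ∀ k : Fin d, x k = y k + (v k : ℝ) := by
  intro x
  obtain ⟨b, hb⟩ := hbasis
  set M : Matrix (Fin d) (Fin d) ℤ := fun i k => u i ⬝ᵥ α k with hM
  obtain ⟨n, hn, hnuniq⟩ := key d M (fun i k h => hadapt i k (by exact_mod_cast h)) hpos
    (fun k => rdot x (α k))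
  set v : Fin d → ℤ := ∑ i, n i • u i with hv
  have hQ : ∀ (w : Fin d → ℤ) (c : Fin d → ℤ), w = ∑ i, c i • u i →
      ∀ k, rdot (fun j => x j - (w j : ℝ)) (α k)
        = rdot x (α k) - ∑ i, (c i : ℝ) * (M i k : ℝ) := by
    intro w c hw k
    rw [rdot_sub, hw, dot_sum]
    push_cast
    ring_nf
    rfl
  refine ⟨fun k => x k - (v k : ℝ), ⟨?_, v, fun k => by ring⟩, ?_⟩
  · intro k
    rw [hQ v n rfl k]
    exact hn k
  · rintro y ⟨hy, w, hw⟩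
    have hyw : y = fun j => x j - (w j : ℝ) := by
      funext j; have := hw j; linarith
    have hwsum : w = ∑ i, (b.repr w) i • u i := by
      conv_lhs => rw [← b.sum_repr w]
      simp [hb]
    have : (fun i => b.repr w i) = n := by
      apply hnuniq
      intro k
      have := hy k
      rw [hyw, hQ w _ hwsum k] at this
      exact this
    have hwv : w = v := by
      rw [hwsum, hv]
      exact Finset.sum_congr rfl (fun i _ => by rw [show b.repr w i = n i from congrFun this i])
    rw [hyw, hwv]
end

section
/- Let F be a face of a complexified toric arrangement A and let Y_F := {(Y,C) : Y a layer with F ⊆ Y, C a chamber of the central arrangement A[Y] with X(Y,C) = Y}. Then the map ξ_F : Y_F → T(A[F]) given by ξ_F(Y,C) = μ[A[Y], A[F]](C) is a bijection, with inverse sending a chamber C of A[F] to (X_C, σ_{A[X_C]}(C)). -/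
open Matrix

def hypComplementS {d : ℕ} (S : Set (HypPair d)) : Set (Fin d → ℝ) :=
  {x | ∀ p ∈ S, p.1 ⬝ᵥ x ≠ p.2}

def IsChamberS {d : ℕ} (S : Set (HypPair d)) (C : Set (Fin d → ℝ)) : Prop :=
  ∃ x ∈ hypComplementS S, C = connectedComponentIn (hypComplementS S) x

abbrev ChamberS {d : ℕ} (S : Set (HypPair d)) := {C : Set (Fin d → ℝ) // IsChamberS S C}

def IsFlatS {d : ℕ} (S : Set (HypPair d)) (X : Set (Fin d → ℝ)) : Prop :=
  ∃ T : Set (HypPair d), T ⊆ S ∧ X = ⋂ p ∈ T, hypSet p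

/-- The subarrangement A_X of hyperplanes containing `X`. -/
def subArr {d : ℕ} (S : Set (HypPair d)) (X : Set (Fin d → ℝ)) : Set (HypPair d) :=
  {p | p ∈ S ∧ X ⊆ hypSet p}

/-- The center ⋂ A_X of the subarrangement A_X. -/
def centerOf {d : ℕ} (S : Set (HypPair d)) (X : Set (Fin d → ℝ)) : Set (Fin d → ℝ) :=
  ⋂ p ∈ subArr S X, hypSet p

/-- `X` is the critical intersection `X_C` of the chamber `C` of the arrangement `S`,
with respect to the linear extension `r`: `X` is the (reverse-inclusion) least flat
such that every chamber preceding `C` is separated from `C` by a hyperplane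
containing `X`. -/
def IsCrit {d : ℕ} (S : Set (HypPair d)) (r : ChamberS S → ChamberS S → Prop)
    (C : ChamberS S) (X : Set (Fin d → ℝ)) : Prop :=
  (IsFlatS S X ∧ ∀ C' : ChamberS S, r C' C → C' ≠ C →
      ∃ p ∈ S, X ⊆ hypSet p ∧ Separates p C.1 C'.1) ∧
  ∀ Y : Set (Fin d → ℝ),
    (IsFlatS S Y ∧ ∀ C' : ChamberS S, r C' C → C' ≠ C →
        ∃ p ∈ S, Y ⊆ hypSet p ∧ Separates p C.1 C'.1) → Y ⊆ X

def sepSetS {d : ℕ} (S : Set (HypPair d)) (C₁ C₂ : Set (Fin d → ℝ)) : Set (HypPair d) :=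
  {p | p ∈ S ∧ Separates p C₁ C₂}

/-!
The bijection rests on one observation: a hyperplane containing `X` cannot separate two
chambers of `A` lying in the same chamber of `A_X`.  Hence, for `X ⊆ Z`, the chambers preceding
`C ∈ T(A_X)` in the induced order are separated from `C` by hyperplanes containing `Z` if and only
if the chambers preceding `μ C` are separated from `μ C` by such hyperplanes (a predecessor `C'` of
`μ C` either projects to `C`, contradicting the minimality of `μ C`, or projects to a predecessor
of `C`).  So `X` is the critical flat of `μ C` exactly when the center `X` is the critical flat
of `C`, and a chamber `K` with critical flat `X` is the minimal chamber `μ (σ K)` of its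
`A_X`-chamber.
-/

lemma IsPreconnected.mul_pos_of_ne_zero {E : Type*} [TopologicalSpace E] {s : Set E}
    (hs : IsPreconnected s) {f : E → ℝ} (hf : ContinuousOn f s) (h0 : ∀ z ∈ s, f z ≠ 0)
    {x y : E} (hx : x ∈ s) (hy : y ∈ s) : 0 < f x * f y := by
  by_contra! h
  have hzero : (0 : ℝ) ∈ f '' s := by
    rcases le_total (f x) (f y) with hxy | hxy
    · exact hs.intermediate_value hx hy hf ⟨by nlinarith, by nlinarith⟩
    · exact hs.intermediate_value hy hx hf ⟨by nlinarith, by nlinarith⟩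
  obtain ⟨z, hz, hfz⟩ := hzero
  exact h0 z hz hfz

namespace ChamberS

variable {d : ℕ} {S : Set (HypPair d)}

lemma nonempty (C : ChamberS S) : C.1.Nonempty := by
  obtain ⟨x, hx, hC⟩ := C.2
  exact ⟨x, hC ▸ mem_connectedComponentIn hx⟩

lemma eq_of_mem {C₁ C₂ : ChamberS S} {z : Fin d → ℝ} (h₁ : z ∈ C₁.1) (h₂ : z ∈ C₂.1) :
    C₁ = C₂ := by
  obtain ⟨x, -, hC₁⟩ := C₁.2
  obtain ⟨y, -, hC₂⟩ := C₂.2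
  apply Subtype.ext
  rw [hC₁] at h₁ ⊢
  rw [hC₂] at h₂ ⊢
  rw [connectedComponentIn_eq h₁, connectedComponentIn_eq h₂]

lemma eq_of_subset_of_subset {S' : Set (HypPair d)} (K : ChamberS S') {C₁ C₂ : ChamberS S}
    (h₁ : K.1 ⊆ C₁.1) (h₂ : K.1 ⊆ C₂.1) : C₁ = C₂ :=
  let ⟨_, hz⟩ := K.nonempty
  eq_of_mem (h₁ hz) (h₂ hz)

lemma affine_mul_pos (C : ChamberS S) {p : HypPair d} (hp : p ∈ S) {x y : Fin d → ℝ}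
    (hx : x ∈ C.1) (hy : y ∈ C.1) : 0 < (p.1 ⬝ᵥ x - p.2) * (p.1 ⬝ᵥ y - p.2) := by
  obtain ⟨_, -, hC⟩ := C.2
  have hsub : C.1 ⊆ hypComplementS S := hC ▸ connectedComponentIn_subset _ _
  refine (hC ▸ isPreconnected_connectedComponentIn).mul_pos_of_ne_zero ?_
    (fun z hz => sub_ne_zero.mpr (hsub hz p hp)) hx hy
  exact ((continuous_const.dotProduct continuous_id).sub continuous_const).continuousOn

lemma not_separates {C : ChamberS S} {p : HypPair d} (hp : p ∈ S) {M N : Set (Fin d → ℝ)}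
    (hM : M ⊆ C.1) (hN : N ⊆ C.1) : ¬ Separates p M N := by
  rintro ⟨x, hx, y, hy, hxy⟩
  exact hxy.not_gt (C.affine_mul_pos hp (hM hx) (hN hy))

end ChamberS

section Separates

variable {d : ℕ} {p : HypPair d}

lemma Separates.mono {M N C D : Set (Fin d → ℝ)} (h : Separates p M N) (hM : M ⊆ C)
    (hN : N ⊆ D) : Separates p C D :=
  let ⟨x, hx, y, hy, hxy⟩ := h
  ⟨x, hM hx, y, hN hy, hxy⟩

lemma Separates.of_subset_chambers {S : Set (HypPair d)} (hp : p ∈ S) {C D : ChamberS S}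
    (h : Separates p C.1 D.1) {M N : Set (Fin d → ℝ)} (hM : M ⊆ C.1) (hN : N ⊆ D.1)
    (hMne : M.Nonempty) (hNne : N.Nonempty) : Separates p M N := by
  obtain ⟨x, hx, y, hy, hxy⟩ := h
  obtain ⟨m, hm⟩ := hMne
  obtain ⟨n, hn⟩ := hNne
  refine ⟨m, hm, n, hn, ?_⟩
  nlinarith [mul_pos (C.affine_mul_pos hp hx (hM hm)) (D.affine_mul_pos hp hy (hN hn))]

end Separates

section Flats

variable {d : ℕ} {S : Set (HypPair d)} {X Y : Set (Fin d → ℝ)}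

lemma centerOf_eq_of_isFlatS (h : IsFlatS S X) : centerOf S X = X := by
  obtain ⟨T, hTS, rfl⟩ := h
  refine Set.Subset.antisymm ?_ (Set.subset_iInter₂ fun p hp => hp.2)
  exact Set.biInter_subset_biInter_left fun p hp => ⟨hTS hp, Set.biInter_subset_of_mem hp⟩

lemma IsFlatS.subArr_of_subset (hY : IsFlatS S Y) (hXY : X ⊆ Y) : IsFlatS (subArr S X) Y := by
  obtain ⟨T, hTS, rfl⟩ := hY
  exact ⟨T, fun p hp => ⟨hTS hp, hXY.trans (Set.biInter_subset_of_mem hp)⟩, rfl⟩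

lemma IsFlatS.of_subArr (hY : IsFlatS (subArr S X) Y) : IsFlatS S Y :=
  let ⟨T, hTS, hY⟩ := hY
  ⟨T, fun _ hp => (hTS hp).1, hY⟩

end Flats

def SeparatesPredecessors {d : ℕ} (S : Set (HypPair d)) (r : ChamberS S → ChamberS S → Prop)
    (C : ChamberS S) (Z : Set (Fin d → ℝ)) : Prop :=
  ∀ C' : ChamberS S, r C' C → C' ≠ C → ∃ p ∈ S, Z ⊆ hypSet p ∧ Separates p C.1 C'.1

section IsCrit

variable {d : ℕ} {S : Set (HypPair d)} {r : ChamberS S → ChamberS S → Prop} {C : ChamberS S}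
  {X : Set (Fin d → ℝ)}

lemma IsCrit.isFlatS (h : IsCrit S r C X) : IsFlatS S X := h.1.1

lemma IsCrit.separatesPredecessors (h : IsCrit S r C X) : SeparatesPredecessors S r C X := h.1.2

lemma IsCrit.subset_of_separatesPredecessors (h : IsCrit S r C X) {Y : Set (Fin d → ℝ)}
    (hY : IsFlatS S Y) (hYsep : SeparatesPredecessors S r C Y) : Y ⊆ X :=
  h.2 Y ⟨hY, hYsep⟩

end IsCrit

section SectionProjection

variable {d : ℕ} {S : Set (HypPair d)} {X Z : Set (Fin d → ℝ)}
  {r : ChamberS S → ChamberS S → Prop}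
  {μ : ChamberS (subArr S X) → ChamberS S} {σ : ChamberS S → ChamberS (subArr S X)}

lemma section_injective (hμsub : ∀ C, (μ C).1 ⊆ C.1) : Function.Injective μ :=
  fun D C h => (μ D).eq_of_subset_of_subset (hμsub D) (h ▸ hμsub C)

lemma projection_section (hμsub : ∀ C, (μ C).1 ⊆ C.1) (hσ : ∀ K, K.1 ⊆ (σ K).1)
    (C : ChamberS (subArr S X)) : σ (μ C) = C :=
  (μ C).eq_of_subset_of_subset (hσ (μ C)) (hμsub C)

lemma SeparatesPredecessors.of_subArr [IsTrans _ r] [Std.Antisymm r]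
    (hμsub : ∀ C, (μ C).1 ⊆ C.1) (hμmin : ∀ C K, K.1 ⊆ C.1 → r (μ C) K)
    (hσ : ∀ K, K.1 ⊆ (σ K).1) {C : ChamberS (subArr S X)}
    (h : SeparatesPredecessors (subArr S X) (InvImage r μ) C Z) :
    SeparatesPredecessors S r (μ C) Z := by
  intro C' hC' hne
  by_cases hσC' : σ C' = C
  · exact absurd (antisymm hC' (hμmin C C' (hσC' ▸ hσ C'))) hne
  · have hpred : r (μ (σ C')) (μ C) := _root_.trans (hμmin _ C' (hσ C')) hC'
    obtain ⟨p, hp, hZp, hsep⟩ := h (σ C') hpred hσC'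
    exact ⟨p, hp.1, hZp,
      hsep.of_subset_chambers hp (hμsub C) (hσ C') (μ C).nonempty C'.nonempty⟩

lemma SeparatesPredecessors.to_subArr (hμsub : ∀ C, (μ C).1 ⊆ C.1) (hXZ : X ⊆ Z)
    {C : ChamberS (subArr S X)} (h : SeparatesPredecessors S r (μ C) Z) :
    SeparatesPredecessors (subArr S X) (InvImage r μ) C Z := by
  intro D hD hne
  obtain ⟨p, hp, hZp, hsep⟩ := h (μ D) hD ((section_injective hμsub).ne hne)
  exact ⟨p, ⟨hp, hXZ.trans hZp⟩, hZp, hsep.mono (hμsub C) (hμsub D)⟩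

lemma section_projection_eq (hμsub : ∀ C, (μ C).1 ⊆ C.1)
    (hμmin : ∀ C K, K.1 ⊆ C.1 → r (μ C) K) (hσ : ∀ K, K.1 ⊆ (σ K).1) {K : ChamberS S}
    (hK : SeparatesPredecessors S r K X) : μ (σ K) = K := by
  by_contra hne
  obtain ⟨p, hp, hXp, hsep⟩ := hK _ (hμmin (σ K) K (hσ K)) hne
  exact ChamberS.not_separates (C := σ K) ⟨hp, hXp⟩ (hσ K) (hμsub _) hsep

end SectionProjection

theorem stmt12_general {d : ℕ} (A : Finset (HypPair d))
    (r : ChamberS (↑A : Set (HypPair d)) → ChamberS (↑A : Set (HypPair d)) → Prop)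
    (hr : IsLinearOrder _ r)
    -- the sections μ[A_X, A] for every flat X, with their defining property
    (μ : ∀ X : Set (Fin d → ℝ), ChamberS (subArr (↑A) X) → ChamberS (↑A : Set (HypPair d)))
    (hμsub : ∀ X C, (μ X C).1 ⊆ C.1)
    (hμmin : ∀ X C (K : ChamberS (↑A : Set (HypPair d))), K.1 ⊆ C.1 → r (μ X C) K)
    -- the projections σ_{A_X} : T(A) → T(A_X)
    (σ : ∀ X : Set (Fin d → ℝ), ChamberS (↑A : Set (HypPair d)) → ChamberS (subArr (↑A) X))
    (hσ : ∀ X K, K.1 ⊆ (σ X K).1) :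
    -- ξ_F is injective, with left inverse C ↦ (X_C, σ_{A_{X_C}}(C)) ...
    (∀ (X : Set (Fin d → ℝ)), IsFlatS (↑A) X →
      ∀ C : ChamberS (subArr (↑A) X),
        -- (X, C) ∈ Y_F : the critical flat of C in A_X (wrt the induced order) is the center
        IsCrit (subArr (↑A) X) (fun C₁ C₂ => r (μ X C₁) (μ X C₂)) C (centerOf (↑A) X) →
        ∀ XC : Set (Fin d → ℝ), IsCrit (↑A) r (μ X C) XC → XC = X ∧ σ X (μ X C) = C) ∧
    -- ... and surjective: every chamber K of A[F] is the image of (X_K, σ_{A_{X_K}}(K)) ∈ Y_F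
    (∀ (K : ChamberS (↑A : Set (HypPair d))) (XC : Set (Fin d → ℝ)),
      IsCrit (↑A) r K XC →
        IsCrit (subArr (↑A) XC) (fun C₁ C₂ => r (μ XC C₁) (μ XC C₂)) (σ XC K)
          (centerOf (↑A) XC) ∧
        μ XC (σ XC K) = K) := by
  refine ⟨fun X hX C hC XC hXC => ?_, fun K XC hK => ?_⟩
  · rw [centerOf_eq_of_isFlatS hX] at hC
    have hXXC : X ⊆ XC := hXC.subset_of_separatesPredecessors hX
      (hC.separatesPredecessors.of_subArr (hμsub X) (hμmin X) (hσ X))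
    have hXCX : XC ⊆ X := hC.subset_of_separatesPredecessors
      (hXC.isFlatS.subArr_of_subset hXXC) (hXC.separatesPredecessors.to_subArr (hμsub X) hXXC)
    exact ⟨hXCX.antisymm hXXC, projection_section (hμsub X) (hσ X) C⟩
  · have hμK : μ XC (σ XC K) = K :=
      section_projection_eq (hμsub XC) (hμmin XC) (hσ XC) hK.separatesPredecessors
    have hKsep := hK.separatesPredecessors
    rw [← hμK] at hKsep
    rw [centerOf_eq_of_isFlatS hK.isFlatS]
    refine ⟨⟨⟨?_, hKsep.to_subArr (hμsub XC) subset_rfl⟩, fun Y hY => ?_⟩, hμK⟩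
    · exact hK.isFlatS.subArr_of_subset subset_rfl
    · exact hK.subset_of_separatesPredecessors hY.1.of_subArr
        (hμK ▸ SeparatesPredecessors.of_subArr (hμsub XC) (hμmin XC) (hσ XC) hY.2)

theorem stmt12 {d : ℕ} (A : Finset (HypPair d))
    (hcentral : ∀ p ∈ A, p.2 = 0)
    (B : ChamberS (↑A : Set (HypPair d)))
    (r : ChamberS (↑A : Set (HypPair d)) → ChamberS (↑A : Set (HypPair d)) → Prop)
    (hr : IsLinearOrder _ r)
    (hext : ∀ C D, sepSetS (↑A) C.1 B.1 ⊆ sepSetS (↑A) D.1 B.1 → r C D)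
    -- the sections μ[A_X, A] for every flat X, with their defining property
    (μ : ∀ X : Set (Fin d → ℝ), ChamberS (subArr (↑A) X) → ChamberS (↑A : Set (HypPair d)))
    (hμsub : ∀ X C, (μ X C).1 ⊆ C.1)
    (hμmin : ∀ X C (K : ChamberS (↑A : Set (HypPair d))), K.1 ⊆ C.1 → r (μ X C) K)
    -- the projections σ_{A_X} : T(A) → T(A_X)
    (σ : ∀ X : Set (Fin d → ℝ), ChamberS (↑A : Set (HypPair d)) → ChamberS (subArr (↑A) X))
    (hσ : ∀ X K, K.1 ⊆ (σ X K).1) :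
    -- ξ_F is injective, with left inverse C ↦ (X_C, σ_{A_{X_C}}(C)) ...
    (∀ (X : Set (Fin d → ℝ)), IsFlatS (↑A) X →
      ∀ C : ChamberS (subArr (↑A) X),
        -- (X, C) ∈ Y_F : the critical flat of C in A_X (wrt the induced order) is the center
        IsCrit (subArr (↑A) X) (fun C₁ C₂ => r (μ X C₁) (μ X C₂)) C (centerOf (↑A) X) →
        ∀ XC : Set (Fin d → ℝ), IsCrit (↑A) r (μ X C) XC → XC = X ∧ σ X (μ X C) = C) ∧
    -- ... and surjective: every chamber K of A[F] is the image of (X_K, σ_{A_{X_K}}(K)) ∈ Y_F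
    (∀ (K : ChamberS (↑A : Set (HypPair d))) (XC : Set (Fin d → ℝ)),
      IsCrit (↑A) r K XC →
        IsCrit (subArr (↑A) XC) (fun C₁ C₂ => r (μ XC C₁) (μ XC C₂)) (σ XC K)
          (centerOf (↑A) XC) ∧
        μ XC (σ XC K) = K) :=
  stmt12_general A r hr μ hμsub hμmin σ hσ
end
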